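/- Let g ≥ 2 be an integer, α = g + √(g²−1), and let (rₙ) satisfy Σ_{i|n} i·rᵢ = αⁿ + α⁻ⁿ with all rᵢ ≥ 0. Then n·rₙ ≥ αⁿ + α⁻ⁿ − Σ_{i ≤ n/2} (αⁱ + α⁻ⁱ), and consequently rₙ / (αⁿ/n) → 1 as n → ∞. -/

import Mathlib

/-!
Every proper divisor of `n` is at most `n / 2`, so in `∑_{d ∣ n} d r_d = αⁿ + α⁻ⁿ` the term
`n r_n` is squeezed between the right-hand side and the right-hand side minus
`∑_{i ≤ n/2} (αⁱ + α⁻ⁱ)`, each earlier term being bounded by its own divisor-sum identity.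
That correction is a geometric sum of size `O(α^{n/2}) = o(αⁿ)`, which gives `n r_n ~ αⁿ`.
-/

open Filter Finset Topology

namespace Nat

lemma le_div_two_of_mem_properDivisors {d n : ℕ} (h : d ∈ n.properDivisors) : d ≤ n / 2 := by
  have h2 : 2 ≤ n / d := one_lt_div_of_mem_properDivisors h
  rw [Nat.le_div_iff_mul_le two_pos]
  calc d * 2 ≤ d * (n / d) := Nat.mul_le_mul_left d h2
    _ = n := Nat.mul_div_cancel' (mem_properDivisors.mp h).1

lemma properDivisors_subset_Icc_one_div_two (n : ℕ) : n.properDivisors ⊆ Icc 1 (n / 2) :=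
  fun _ hd => mem_Icc.mpr ⟨pos_of_mem_properDivisors hd, le_div_two_of_mem_properDivisors hd⟩

end Nat

section DivisorSum

variable {w a : ℕ → ℝ}

lemma le_of_sum_divisors_eq (hw : ∀ i, 0 ≤ w i)
    (ha : ∀ n, 1 ≤ n → ∑ d ∈ n.divisors, w d = a n) {n : ℕ} (hn : 1 ≤ n) : w n ≤ a n :=
  ha n hn ▸ single_le_sum (fun d _ => hw d) (Nat.mem_divisors_self n (by omega))

lemma sub_sum_Icc_le_of_sum_divisors_eq (hw : ∀ i, 0 ≤ w i)
    (ha : ∀ n, 1 ≤ n → ∑ d ∈ n.divisors, w d = a n) {n : ℕ} (hn : 1 ≤ n) :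
    a n - ∑ i ∈ Icc 1 (n / 2), a i ≤ w n := by
  have hsplit : a n = ∑ d ∈ n.properDivisors, w d + w n := by
    rw [← ha n hn, ← Nat.cons_self_properDivisors (by omega), sum_cons, add_comm]
  have hproper : ∑ d ∈ n.properDivisors, w d ≤ ∑ i ∈ Icc 1 (n / 2), a i :=
    calc ∑ d ∈ n.properDivisors, w d ≤ ∑ d ∈ n.properDivisors, a d :=
          sum_le_sum fun d hd => le_of_sum_divisors_eq hw ha (Nat.pos_of_mem_properDivisors hd)
      _ ≤ ∑ i ∈ Icc 1 (n / 2), a i :=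
          sum_le_sum_of_subset_of_nonneg (Nat.properDivisors_subset_Icc_one_div_two n)
            fun i hi _ => (hw i).trans (le_of_sum_divisors_eq hw ha (mem_Icc.mp hi).1)
  linarith

lemma tendsto_div_of_sum_divisors_eq {b : ℕ → ℝ} (hw : ∀ i, 0 ≤ w i)
    (ha : ∀ n, 1 ≤ n → ∑ d ∈ n.divisors, w d = a n) (hb : ∀ n, 0 ≤ b n)
    (hmain : Tendsto (fun n => a n / b n) atTop (𝓝 1))
    (htail : Tendsto (fun n => (∑ i ∈ Icc 1 (n / 2), a i) / b n) atTop (𝓝 0)) :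
    Tendsto (fun n => w n / b n) atTop (𝓝 1) := by
  have hlower : Tendsto (fun n => (a n - ∑ i ∈ Icc 1 (n / 2), a i) / b n) atTop (𝓝 1) := by
    simpa only [sub_div, sub_zero] using hmain.sub htail
  refine tendsto_of_tendsto_of_tendsto_of_le_of_le' hlower hmain ?_ ?_ <;>
    filter_upwards [eventually_ge_atTop 1] with n hn
  · exact div_le_div_of_nonneg_right (sub_sum_Icc_le_of_sum_divisors_eq hw ha hn) (hb n)
  · exact div_le_div_of_nonneg_right (le_of_sum_divisors_eq hw ha hn) (hb n)

end DivisorSum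

section PowAddInvPow

variable {α : ℝ}

lemma tendsto_pow_add_inv_pow_div_pow (hα : 1 < α) :
    Tendsto (fun n : ℕ => (α ^ n + α⁻¹ ^ n) / α ^ n) atTop (𝓝 1) := by
  have hsq : Tendsto (fun n : ℕ => 1 + (α⁻¹ ^ 2) ^ n) atTop (𝓝 1) := by
    simpa using (tendsto_pow_atTop_nhds_zero_of_lt_one (by positivity)
      (pow_lt_one₀ (by positivity) (inv_lt_one_of_one_lt₀ hα) two_ne_zero)).const_add 1
  refine hsq.congr fun n => ?_
  rw [add_div, div_self (by positivity), div_eq_mul_inv, ← inv_pow, ← mul_pow, ← sq]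

lemma sum_Icc_pow_add_inv_pow_le (hα : 1 < α) (m : ℕ) :
    ∑ i ∈ Icc 1 m, (α ^ i + α⁻¹ ^ i) ≤ 2 * α / (α - 1) * α ^ m := by
  have hα1 : 0 < α - 1 := by linarith
  have hinv : α⁻¹ ≤ α := (inv_le_one_of_one_le₀ hα.le).trans hα.le
  calc ∑ i ∈ Icc 1 m, (α ^ i + α⁻¹ ^ i) ≤ ∑ i ∈ Icc 1 m, 2 * α ^ i :=
        sum_le_sum fun i _ => by linarith [pow_le_pow_left₀ (by positivity) hinv i]
    _ ≤ ∑ i ∈ range (m + 1), 2 * α ^ i :=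
        sum_le_sum_of_subset_of_nonneg
          (fun i hi => by simpa [Nat.lt_succ_iff] using (mem_Icc.mp hi).2)
          (fun i _ _ => by positivity)
    _ = 2 * ((α ^ (m + 1) - 1) / (α - 1)) := by rw [← mul_sum, geom_sum_eq hα.ne']
    _ ≤ 2 * α / (α - 1) * α ^ m := by
        rw [mul_div_assoc', div_mul_eq_mul_div, div_le_div_iff_of_pos_right hα1, pow_succ]
        linarith

lemma pow_div_two_div_pow_le (hα : 1 < α) (n : ℕ) : α ^ (n / 2) / α ^ n ≤ α⁻¹ ^ (n / 2) := by
  rw [div_le_iff₀ (by positivity), inv_pow, ← div_eq_inv_mul, le_div_iff₀ (by positivity),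
    ← pow_add]
  exact pow_le_pow_right₀ hα.le (by omega)

lemma tendsto_sum_Icc_half_div_pow (hα : 1 < α) :
    Tendsto (fun n : ℕ => (∑ i ∈ Icc 1 (n / 2), (α ^ i + α⁻¹ ^ i)) / α ^ n) atTop (𝓝 0) := by
  set C := 2 * α / (α - 1)
  have hC : 0 ≤ C := div_nonneg (by positivity) (by linarith)
  have hbound : Tendsto (fun n : ℕ => C * α⁻¹ ^ (n / 2)) atTop (𝓝 0) := by
    simpa using ((tendsto_pow_atTop_nhds_zero_of_lt_one (by positivity)
      (inv_lt_one_of_one_lt₀ hα)).comp (Nat.tendsto_div_const_atTop two_ne_zero)).const_mul C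
  refine squeeze_zero (fun n => by positivity) (fun n => ?_) hbound
  calc (∑ i ∈ Icc 1 (n / 2), (α ^ i + α⁻¹ ^ i)) / α ^ n ≤ C * α ^ (n / 2) / α ^ n := by
        gcongr
        exact sum_Icc_pow_add_inv_pow_le hα _
    _ ≤ C * α⁻¹ ^ (n / 2) := by
        rw [mul_div_assoc]
        exact mul_le_mul_of_nonneg_left (pow_div_two_div_pow_le hα n) hC

end PowAddInvPow

theorem stmt5 (g : ℤ) (hg : 2 ≤ g)
    (α : ℝ) (hα : α = (g : ℝ) + Real.sqrt ((g : ℝ)^2 - 1))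
    (r : ℕ → ℚ)
    (hpos : ∀ i : ℕ, 0 ≤ r i)
    (hr : ∀ n : ℕ, 1 ≤ n →
      (∑ i ∈ n.divisors, (i : ℝ) * (r i : ℝ)) = α ^ n + α⁻¹ ^ n) :
    (∀ n : ℕ, 1 ≤ n →
      (n : ℝ) * (r n : ℝ) ≥
        α ^ n + α⁻¹ ^ n - ∑ i ∈ Finset.Icc 1 (n / 2), (α ^ i + α⁻¹ ^ i)) ∧
    Tendsto (fun n : ℕ => (r n : ℝ) / (α ^ n / (n : ℝ))) atTop (nhds 1) := by
  have hα1 : 1 < α := by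
    have : (2 : ℝ) ≤ g := by exact_mod_cast hg
    linarith [Real.sqrt_nonneg ((g : ℝ) ^ 2 - 1)]
  have hw : ∀ i : ℕ, 0 ≤ (i : ℝ) * (r i : ℝ) :=
    fun i => mul_nonneg i.cast_nonneg (Rat.cast_nonneg.mpr (hpos i))
  refine ⟨fun n hn => sub_sum_Icc_le_of_sum_divisors_eq (a := fun n => α ^ n + α⁻¹ ^ n) hw hr hn,
    ?_⟩
  refine (tendsto_div_of_sum_divisors_eq (a := fun n => α ^ n + α⁻¹ ^ n) hw hr
    (fun n => by positivity) (tendsto_pow_add_inv_pow_div_pow hα1)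
    (tendsto_sum_Icc_half_div_pow hα1)).congr fun n => ?_
  rw [div_div_eq_mul_div, mul_comm]
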